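/- Let q be a prime, d ≥ 2, h ≥ 0 and set κ_h = log_2(h + 2 + ⌈log_q d⌉). Let f be a random d-tuple of fractional Laurent series over ℤ_q with the d-fold Haar measure, x_n = φ({t^{n-1} f}), and let K = [0,w)\[0,v) ⊆ [0,1)^d be a box difference whose coordinates v_i, w_i are rationals with denominators q^{h+1+⌈log_q d⌉} and q^{h+2+⌈log_q d⌉} respectively. Define Δ_K(x) = 1_K(x) - λ(K). Then for any γ ∈ {0,...,2^{κ_h} - 1} and any indices n_1 < n_2 < ... < n_l all congruent to γ modulo 2^{κ_h} (so consecutive indices differ by at least h + 2 + ⌈log_q d⌉), the random variables Δ_K(x_{n_1}), ..., Δ_K(x_{n_l}) are mutually independent. -/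

import Mathlib

open MeasureTheory ProbabilityTheory

/-- `φ` applied componentwise to a `d`-tuple of fractional Laurent series over `ℤ_q`
(coefficient sequences `ℕ → ZMod q`, index `j` encoding the coefficient of `t^{-(j+1)}`). -/
noncomputable def phiVec (q : ℕ) [NeZero q] {d : ℕ} (p : Fin d → ℕ → ZMod q) :
    Fin d → ℝ :=
  fun i => ∑' j : ℕ, (((p i j).val : ℝ)) / (q : ℝ) ^ (j + 1)

/-- The axis-parallel box `[0, v)`. -/
def lowerBox {d : ℕ} (v : Fin d → ℝ) : Set (Fin d → ℝ) :=
  Set.univ.pi fun i => Set.Ico 0 (v i)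

/-!
Write `m = h + 2 + ⌈log_q d⌉`. All corners of `K` lie on the grid `q^{-m} ℤ`, so whether
`x_n ∈ K` is decided by `⌊q^m x_n⌋`, which is read off from the `m` digits `f_n, …, f_{n+m-1}`
of each coordinate unless a tail of `f` is constantly `q - 1`, a null event. For indices in one
residue class modulo `m` these digit windows are disjoint, so restricting `f` to them is a
surjective homomorphism onto a finite group. The image of the Haar measure is then an invariant
probability measure on a finite group, hence the uniform one, which is the product of its
marginals.
-/

open Function
open scoped ENNReal

section FiniteAddGroup

variable {G : Type*} [AddGroup G] [Fintype G] [MeasurableSpace G] [MeasurableSingletonClass G]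
  [MeasurableAdd G]

theorem measure_singleton_of_isAddLeftInvariant (P : Measure G) [IsProbabilityMeasure P]
    [P.IsAddLeftInvariant] (x : G) : P {x} = (Fintype.card G : ℝ≥0∞)⁻¹ := by
  have h_const : ∀ y, P {y} = P {x} := fun y => by
    rw [← measure_preimage_add P (y - x) {y}, Set.preimage_add_left_singleton, neg_sub,
      sub_add_cancel]
  refine ENNReal.eq_inv_of_mul_eq_one_left ?_
  rw [← measure_univ (μ := P), ← Finset.coe_univ, ← sum_measure_singleton]
  simp [h_const, mul_comm]

theorem eq_of_isAddLeftInvariant (P Q : Measure G) [IsProbabilityMeasure P]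
    [IsProbabilityMeasure Q] [P.IsAddLeftInvariant] [Q.IsAddLeftInvariant] : P = Q :=
  Measure.ext_of_singleton fun x => by
    rw [measure_singleton_of_isAddLeftInvariant, measure_singleton_of_isAddLeftInvariant]

end FiniteAddGroup

section SurjectiveAddMonoidHom

variable {Ω : Type*} [AddGroup Ω] [MeasurableSpace Ω] [MeasurableAdd Ω]
  (ν : Measure Ω) [IsProbabilityMeasure ν] [ν.IsAddLeftInvariant]

theorem measure_preimage_singleton_of_surjective {G : Type*} [AddGroup G] [Fintype G]
    [MeasurableSpace G] [MeasurableSingletonClass G] [MeasurableAdd G] {Φ : Ω →+ G}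
    (hΦ : Measurable Φ) (hsurj : Surjective Φ) (x : G) :
    ν (Φ ⁻¹' {x}) = (Fintype.card G : ℝ≥0∞)⁻¹ := by
  have := isAddLeftInvariant_map (μ := ν) Φ.toAddHom hΦ hsurj
  have := Measure.isProbabilityMeasure_map (μ := ν) hΦ.aemeasurable
  rw [← Measure.map_apply hΦ (measurableSet_singleton x)]
  exact measure_singleton_of_isAddLeftInvariant _ x

theorem iIndepFun_of_surjective_addMonoidHom {ι : Type*} [Fintype ι] {G : ι → Type*}
    [∀ i, AddGroup (G i)] [∀ i, Fintype (G i)] [∀ i, MeasurableSpace (G i)]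
    [∀ i, MeasurableSingletonClass (G i)] [∀ i, MeasurableAdd (G i)] {Φ : Ω →+ ∀ i, G i}
    (hΦ : Measurable Φ) (hsurj : Surjective Φ) : iIndepFun (fun i ω => Φ ω i) ν := by
  classical
  have hΦi : ∀ i, Measurable fun ω => Φ ω i := fun i => (measurable_pi_apply i).comp hΦ
  rw [iIndepFun_iff_map_fun_eq_pi_map fun i => (hΦi i).aemeasurable]
  have := isAddLeftInvariant_map (μ := ν) Φ.toAddHom hΦ hsurj
  have := Measure.isProbabilityMeasure_map (μ := ν) hΦ.aemeasurable
  have : ∀ i, (ν.map fun ω => Φ ω i).IsAddLeftInvariant := fun i =>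
    isAddLeftInvariant_map ((Pi.evalAddMonoidHom G i).comp Φ).toAddHom (hΦi i)
      ((surjective_eval i).comp hsurj)
  have : ∀ i, IsProbabilityMeasure (ν.map fun ω => Φ ω i) := fun i =>
    Measure.isProbabilityMeasure_map (hΦi i).aemeasurable
  exact eq_of_isAddLeftInvariant _ _

end SurjectiveAddMonoidHom

namespace Real

variable {b : ℕ}

theorem ofDigits_lt_one {a : ℕ → Fin b} (h : ∃ j, (a j : ℕ) ≠ b - 1) : ofDigits a < 1 := by
  obtain ⟨j, hj⟩ := h
  have hb : 1 < b := by have := (a j).isLt; omega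
  rw [← ofDigits_const_last_eq_one' hb]
  refine Summable.tsum_lt_tsum (i := j) (fun i => ?_) ?_ summable_ofDigitsTerm
    summable_ofDigitsTerm
  · simp only [ofDigitsTerm]
    gcongr
    exact_mod_cast (by omega : (a i : ℕ) ≤ b - 1)
  · simp only [ofDigitsTerm]
    gcongr
    exact_mod_cast (by omega : (a j : ℕ) < b - 1)

theorem exists_natCast_eq_pow_mul_sum_ofDigitsTerm (a : ℕ → Fin b) (n : ℕ) :
    ∃ N : ℕ, (b : ℝ) ^ n * ∑ i ∈ Finset.range n, ofDigitsTerm a i = N := by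
  have hb : (b : ℝ) ≠ 0 := by have := (a 0).pos; positivity
  induction n with
  | zero => exact ⟨0, by simp⟩
  | succ n ih =>
    obtain ⟨N, hN⟩ := ih
    refine ⟨b * N + a n, ?_⟩
    rw [Finset.sum_range_succ, mul_add, pow_succ', mul_assoc, hN, ofDigitsTerm]
    field_simp
    push_cast
    ring

theorem floor_pow_mul_ofDigits (a : ℕ → Fin b) (n : ℕ) (h : ∃ j, (a (j + n) : ℕ) ≠ b - 1) :
    ⌊(b : ℝ) ^ n * ofDigits a⌋₊ = ⌊(b : ℝ) ^ n * ∑ i ∈ Finset.range n, ofDigitsTerm a i⌋₊ := by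
  have hb : (b : ℝ) ≠ 0 := by have := (a 0).pos; positivity
  obtain ⟨N, hN⟩ := exists_natCast_eq_pow_mul_sum_ofDigitsTerm a n
  rw [ofDigits_eq_sum_add_ofDigits a n, mul_add, ← mul_assoc, mul_inv_cancel₀ (by positivity),
    one_mul, hN, add_comm, Nat.floor_add_natCast (ofDigits_nonneg _), Nat.floor_natCast,
    Nat.floor_eq_zero.mpr (ofDigits_lt_one h), zero_add]

end Real

theorem mem_lowerBox_iff_of_floor_eq {d : ℕ} {N : ℝ} (hN : 0 < N) {u x y : Fin d → ℝ}
    (hu : ∀ i, ∃ c : ℕ, u i = c / N) (hx : ∀ i, 0 ≤ x i) (hy : ∀ i, 0 ≤ y i)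
    (hxy : ∀ i, ⌊N * x i⌋₊ = ⌊N * y i⌋₊) : x ∈ lowerBox u ↔ y ∈ lowerBox u := by
  simp only [lowerBox, Set.mem_univ_pi, Set.mem_Ico, hx, hy, true_and]
  refine forall_congr' fun i => ?_
  obtain ⟨c, hc⟩ := hu i
  rw [hc, lt_div_iff₀' hN, lt_div_iff₀' hN, ← Nat.floor_lt (by have := hx i; positivity),
    ← Nat.floor_lt (by have := hy i; positivity), hxy i]

section Truncation

variable {q : ℕ}

def zmodDigits [NeZero q] (s : ℕ → ZMod q) : ℕ → Fin q := fun j => ⟨(s j).val, ZMod.val_lt _⟩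

noncomputable def phiVecTrunc (q : ℕ) {d m : ℕ} (p : Fin d → Fin m → ZMod q) : Fin d → ℝ :=
  fun i => ∑ k, ((p i k).val : ℝ) / (q : ℝ) ^ ((k : ℕ) + 1)

theorem phiVec_apply_eq_ofDigits [NeZero q] {d : ℕ} (p : Fin d → ℕ → ZMod q) (i : Fin d) :
    phiVec q p i = Real.ofDigits (zmodDigits (p i)) := by
  simp [phiVec, Real.ofDigits, Real.ofDigitsTerm, zmodDigits, div_eq_mul_inv]

theorem phiVecTrunc_apply_eq_sum_ofDigitsTerm [NeZero q] {d m : ℕ} (p : Fin d → ℕ → ZMod q)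
    (i : Fin d) :
    phiVecTrunc q (fun i (k : Fin m) => p i k) i
      = ∑ k ∈ Finset.range m, Real.ofDigitsTerm (zmodDigits (p i)) k := by
  rw [phiVecTrunc, Fin.sum_univ_eq_sum_range (fun k => ((p i k).val : ℝ) / (q : ℝ) ^ (k + 1))]
  simp [Real.ofDigitsTerm, zmodDigits, div_eq_mul_inv]

theorem mem_lowerBox_phiVec_iff [NeZero q] {d m : ℕ} {p : Fin d → ℕ → ZMod q}
    (hp : ∀ i, ∃ j, (p i (j + m)).val ≠ q - 1) {u : Fin d → ℝ}
    (hu : ∀ i, ∃ c : ℕ, u i = c / (q : ℝ) ^ m) :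
    phiVec q p ∈ lowerBox u ↔ phiVecTrunc q (fun i (k : Fin m) => p i k) ∈ lowerBox u := by
  refine mem_lowerBox_iff_of_floor_eq (pow_pos (Nat.cast_pos.mpr (NeZero.pos q)) m) hu
    (fun i => phiVec_apply_eq_ofDigits p i ▸ Real.ofDigits_nonneg _)
    (fun i => Finset.sum_nonneg fun k _ => by positivity) fun i => ?_
  rw [phiVec_apply_eq_ofDigits, phiVecTrunc_apply_eq_sum_ofDigitsTerm]
  exact Real.floor_pow_mul_ofDigits _ m (hp i)

end Truncation

section DigitWindows

variable {q : ℕ} {δ ι κ : Type*}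

def digitWindows (pos : ι → κ → ℕ) : (δ → ℕ → ZMod q) →+ (ι → δ → κ → ZMod q) where
  toFun f r i k := f i (pos r k)
  map_zero' := rfl
  map_add' _ _ := rfl

theorem digitWindows_surjective {pos : ι → κ → ℕ} (hpos : Injective (uncurry pos)) :
    Surjective (digitWindows (q := q) (δ := δ) pos) := by
  intro B
  choose f hf using fun i => hpos.surjective_comp_right fun x : ι × κ => B x.1 i x.2
  exact ⟨f, funext fun r => funext fun i => funext fun k => congrFun (hf i) (r, k)⟩

variable [MeasurableSpace (ℕ → ZMod q)] [BorelSpace (ℕ → ZMod q)]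

theorem measurable_apply_apply (i : δ) (j : ℕ) : Measurable fun f : δ → ℕ → ZMod q => f i j :=
  (continuous_apply j).measurable.comp (measurable_pi_apply (X := fun _ => ℕ → ZMod q) i)

theorem measurable_digitWindows (pos : ι → κ → ℕ) :
    Measurable (digitWindows (q := q) (δ := δ) pos) :=
  measurable_pi_lambda _ fun r => measurable_pi_lambda _ fun i => measurable_pi_lambda _ fun k =>
    measurable_apply_apply i (pos r k)

variable [NeZero q] (μ : Measure (ℕ → ZMod q)) [IsProbabilityMeasure μ] [μ.IsAddLeftInvariant]

theorem iIndepFun_digitWindows [Fintype δ] [Fintype ι] [Finite κ] {pos : ι → κ → ℕ}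
    (hpos : Injective (uncurry pos)) :
    iIndepFun (fun r f => digitWindows pos f r) (Measure.pi fun _ : δ => μ) := by
  have := Fintype.ofFinite κ
  have := Measure.pi.isAddLeftInvariant fun _ : δ => μ
  classical
  exact iIndepFun_of_surjective_addMonoidHom _ (measurable_digitWindows pos)
    (digitWindows_surjective hpos)

theorem measure_tail_eq_const_eq_zero (hq : 1 < q) (N : ℕ) (c : ZMod q) :
    μ {s | ∀ j, s (j + N) = c} = 0 := by
  -- the `T` digits after position `N` are uniformly distributed on `(ZMod q)^T`
  have hle : ∀ T : ℕ, μ {s | ∀ j, s (j + N) = c} ≤ (q : ℝ≥0∞)⁻¹ ^ T := fun T => by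
    let window := (LinearMap.funLeft ℤ (ZMod q) fun k : Fin T => (k : ℕ) + N).toAddMonoidHom
    have hwindow : Measurable window :=
      measurable_pi_lambda _ fun k => (continuous_apply ((k : ℕ) + N)).measurable
    calc μ {s | ∀ j, s (j + N) = c} ≤ μ (window ⁻¹' {fun _ => c}) :=
          measure_mono fun s hs => funext fun k => hs k
      _ = (q : ℝ≥0∞)⁻¹ ^ T := by
          rw [measure_preimage_singleton_of_surjective μ hwindow
            (LinearMap.funLeft_surjective_of_injective ℤ (ZMod q) _
              fun k k' h => Fin.ext (by simpa using h))]
          simp [ENNReal.inv_pow]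
  exact le_antisymm (ge_of_tendsto' (ENNReal.tendsto_pow_atTop_nhds_zero_of_lt_one
    (ENNReal.inv_lt_one.mpr (by exact_mod_cast hq))) hle) zero_le

theorem ae_exists_tail_ne [Fintype δ] (hq : 1 < q) (i : δ) (N : ℕ) (c : ZMod q) :
    ∀ᵐ f ∂(Measure.pi fun _ : δ => μ), ∃ j, f i (j + N) ≠ c := by
  rw [ae_iff]
  simp only [ne_eq, not_exists, not_not]
  exact Measure.pi_eval_preimage_null (fun _ : δ => μ) (measure_tail_eq_const_eq_zero μ hq N c)

theorem ae_mem_lowerBox_phiVec_iff (hq : 1 < q) {d : ℕ} (m s : ℕ) {u : Fin d → ℝ}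
    (hu : ∀ i, ∃ c : ℕ, u i = c / (q : ℝ) ^ m) :
    ∀ᵐ f ∂(Measure.pi fun _ : Fin d => μ), phiVec q (fun i j => f i (j + s)) ∈ lowerBox u ↔
      phiVecTrunc q (fun i (k : Fin m) => f i (k + s)) ∈ lowerBox u := by
  filter_upwards [ae_all_iff.2 fun i => ae_exists_tail_ne μ hq i (m + s) ((q - 1 : ℕ) : ZMod q)]
    with f hf
  refine mem_lowerBox_phiVec_iff (fun i => ?_) hu
  obtain ⟨j, hj⟩ := hf i
  exact ⟨j, fun hval => hj (by rw [← add_assoc, ← hval, ZMod.natCast_zmod_val])⟩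

end DigitWindows

theorem injective_uncurry_add_pred_of_mod_eq {ι : Type*} {m γ : ℕ} {n : ι → ℕ}
    (hn : Injective n) (hpos : ∀ r, 1 ≤ n r) (hcong : ∀ r, n r % m = γ) :
    Injective (uncurry fun r (k : Fin m) => (k : ℕ) + (n r - 1)) := by
  rintro ⟨r, k⟩ ⟨r', k'⟩ h
  have h' : (k : ℕ) + n r = k' + n r' := by
    have := hpos r; have := hpos r'; simp only [uncurry_apply_pair] at h; omega
  have hk : k = k' := by
    have hmod : (k : ℕ) ≡ k' [MOD m] :=
      Nat.ModEq.add_right_cancel ((hcong r).trans (hcong r').symm) (h' ▸ rfl)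
    exact Fin.ext (by rwa [Nat.ModEq, Nat.mod_eq_of_lt k.isLt, Nat.mod_eq_of_lt k'.isLt] at hmod)
  subst hk
  rw [hn (by omega : n r = n r')]

theorem stmt18_general (q : ℕ) (hq : q.Prime) (d h : ℕ)
    [MeasurableSpace (ℕ → ZMod q)] [BorelSpace (ℕ → ZMod q)]
    (μ : Measure (ℕ → ZMod q)) [μ.IsAddHaarMeasure] [IsProbabilityMeasure μ]
    (v w : Fin d → ℝ)
    (hv : ∀ i, ∃ a : ℕ, a ≤ q ^ (h + 1 + Nat.clog q d) ∧
        v i = (a : ℝ) / (q : ℝ) ^ (h + 1 + Nat.clog q d))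
    (hw : ∀ i, ∃ b : ℕ, b ≤ q ^ (h + 2 + Nat.clog q d) ∧
        w i = (b : ℝ) / (q : ℝ) ^ (h + 2 + Nat.clog q d))
    (γ : ℕ)
    (l : ℕ) (n : Fin l → ℕ) (hmono : StrictMono n)
    (hpos : ∀ r, 1 ≤ n r) (hcong : ∀ r, n r % (h + 2 + Nat.clog q d) = γ) :
    haveI : NeZero q := ⟨hq.ne_zero⟩
    iIndepFun (m := fun _ : Fin l => (inferInstance : MeasurableSpace ℝ))
      (fun r => fun f : Fin d → ℕ → ZMod q =>
        Set.indicator (lowerBox w \ lowerBox v) (fun _ => (1 : ℝ))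
            (phiVec q (fun i j => f i (j + (n r - 1)))) -
          (volume (lowerBox w \ lowerBox v)).toReal)
      (Measure.pi (fun _ : Fin d => μ)) := by
  have : NeZero q := ⟨hq.ne_zero⟩
  set m := h + 2 + Nat.clog q d with hm
  set K := lowerBox w \ lowerBox v
  have hw_grid : ∀ i, ∃ c : ℕ, w i = c / (q : ℝ) ^ m := fun i => (hw i).imp fun _ hb => hb.2
  have hv_grid : ∀ i, ∃ c : ℕ, v i = c / (q : ℝ) ^ m := fun i => by
    obtain ⟨a, -, ha⟩ := hv i
    refine ⟨a * q, ?_⟩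
    rw [ha, hm, show h + 2 + Nat.clog q d = h + 1 + Nat.clog q d + 1 by ring, pow_succ,
      Nat.cast_mul, mul_div_mul_right _ _ (Nat.cast_ne_zero.mpr hq.ne_zero)]
  have hwindows := injective_uncurry_add_pred_of_mod_eq hmono.injective hpos hcong
  refine ((iIndepFun_digitWindows μ hwindows).comp
    (fun _ B => K.indicator (fun _ => (1 : ℝ)) (phiVecTrunc q B) - (volume K).toReal)
    fun _ => measurable_of_countable _).congr fun r => ?_
  filter_upwards [ae_mem_lowerBox_phiVec_iff μ hq.one_lt m (n r - 1) hw_grid,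
    ae_mem_lowerBox_phiVec_iff μ hq.one_lt m (n r - 1) hv_grid] with f hfw hfv
  exact congrArg (· - _) (Set.indicator_eq_indicator (hfw.and hfv.not).symm rfl)

/-- let `K = [0,w) \ [0,v)` with coordinates on the grids with denominators
`q^{h+1+⌈log_q d⌉}` and `q^{h+2+⌈log_q d⌉}`, let `Δ_K(x) = 1_K(x) - λ(K)`, and let
`x_n(f) = φ({t^{n-1} f})` (coefficient shift by `n-1`).  For indices
`n_1 < ⋯ < n_l`, all `≥ 1` and congruent to `γ` modulo `2^{κ_h} = h + 2 + ⌈log_q d⌉`,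
the random variables `Δ_K(x_{n_1}), …, Δ_K(x_{n_l})` are mutually independent with respect
to the `d`-fold normalized Haar measure.  Here `⌈log_q d⌉ = Nat.clog q d`. -/
theorem stmt18 (q : ℕ) (hq : q.Prime) (d h : ℕ) (hd : 2 ≤ d)
    [MeasurableSpace (ℕ → ZMod q)] [BorelSpace (ℕ → ZMod q)]
    (μ : Measure (ℕ → ZMod q)) [μ.IsAddHaarMeasure] [IsProbabilityMeasure μ]
    (v w : Fin d → ℝ)
    (hv : ∀ i, ∃ a : ℕ, a ≤ q ^ (h + 1 + Nat.clog q d) ∧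
        v i = (a : ℝ) / (q : ℝ) ^ (h + 1 + Nat.clog q d))
    (hw : ∀ i, ∃ b : ℕ, b ≤ q ^ (h + 2 + Nat.clog q d) ∧
        w i = (b : ℝ) / (q : ℝ) ^ (h + 2 + Nat.clog q d))
    (γ : ℕ) (hγ : γ < h + 2 + Nat.clog q d)
    (l : ℕ) (n : Fin l → ℕ) (hmono : StrictMono n)
    (hpos : ∀ r, 1 ≤ n r) (hcong : ∀ r, n r % (h + 2 + Nat.clog q d) = γ) :
    haveI : NeZero q := ⟨hq.ne_zero⟩
    iIndepFun (m := fun _ : Fin l => (inferInstance : MeasurableSpace ℝ))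
      (fun r => fun f : Fin d → ℕ → ZMod q =>
        Set.indicator (lowerBox w \ lowerBox v) (fun _ => (1 : ℝ))
            (phiVec q (fun i j => f i (j + (n r - 1)))) -
          (volume (lowerBox w \ lowerBox v)).toReal)
      (Measure.pi (fun _ : Fin d => μ)) :=
  stmt18_general q hq d h μ v w hv hw γ l n hmono hpos hcong
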